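/- Let R = 𝕜[x_1,…,x_N, y_1, y_2, y_3, …] be the graded polynomial ring with deg x_a = 2a and deg y_b = 2b, and let I be the ideal of R generated, for each d ≥ 1, by the element Σ_{a+b=d} x_a·y_b (the sum over all a, b ≥ 0 with a + b = d, where x_0 = y_0 = 1 and x_a = 0 for a > N). Then the composite of the inclusion 𝕜[x_1,…,x_N] → R with the quotient map R → R/I is an isomorphism of graded 𝕜-algebras; in particular R/I is isomorphic to the polynomial ring 𝕜[x_1,…,x_N]. (R/I is the GL(N,ℂ)-equivariant cohomology of a point, H^*_{GL(N)}(pt) = H^*(Gr(N,∞)).) -/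

import Mathlib

/-!
Put `x(t) = ∑ x_a t^a` and `y(t) = ∑ y_b t^b`. The relations say exactly `x(t) y(t) = 1`, so
modulo `I` every `y_b` equals the `t^b`-coefficient of `x(t)⁻¹`, a polynomial in the `x_a` of
degree `2b`. Sending `y_b` to that coefficient defines a degree-preserving retraction
`R → 𝕜[x_1,…,x_N]` which kills `I` and inverts the composite `𝕜[x_1,…,x_N] → R/I`.
-/

open MvPolynomial Finset

noncomputable section

variable (𝕜 : Type) [Field 𝕜] (N : ℕ)

/-- The generator `x_a` (of degree `2a`) of `R = 𝕜[x_1,…,x_N,y_1,y_2,…]`, with the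
conventions `x_0 = 1` and `x_a = 0` for `a > N`. -/
def xg (a : ℕ) : MvPolynomial (Fin N ⊕ ℕ) 𝕜 :=
  if h : 1 ≤ a ∧ a ≤ N then X (Sum.inl ⟨a - 1, by omega⟩)
  else if a = 0 then 1 else 0

/-- The generator `y_b` (of degree `2b`) of `R`, with the convention `y_0 = 1`. -/
def yg (b : ℕ) : MvPolynomial (Fin N ⊕ ℕ) 𝕜 :=
  if b = 0 then 1 else X (Sum.inr (b - 1))

/-- The ideal `I` generated, for each `d ≥ 1`, by `∑_{a+b=d} x_a · y_b`. -/
def relIdealGr : Ideal (MvPolynomial (Fin N ⊕ ℕ) 𝕜) :=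
  Ideal.span {p | ∃ d, 1 ≤ d ∧
    p = ∑ ab ∈ Finset.HasAntidiagonal.antidiagonal d, xg 𝕜 N ab.1 * yg 𝕜 N ab.2}

/-- The composite `𝕜[x_1,…,x_N] → R → R/I`. -/
def grComposite : MvPolynomial (Fin N) 𝕜 →ₐ[𝕜] MvPolynomial (Fin N ⊕ ℕ) 𝕜 ⧸ relIdealGr 𝕜 N :=
  (Ideal.Quotient.mkₐ 𝕜 (relIdealGr 𝕜 N)).comp (MvPolynomial.rename Sum.inl)

namespace MvPolynomial.IsWeightedHomogeneous

variable {R σ τ M : Type*} [CommSemiring R] [AddCommMonoid M]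

theorem aeval {w : σ → M} {w' : τ → M} {φ : MvPolynomial σ R} {m : M}
    (hφ : φ.IsWeightedHomogeneous w m) (g : σ → MvPolynomial τ R)
    (hg : ∀ i, (g i).IsWeightedHomogeneous w' (w i)) :
    (aeval g φ).IsWeightedHomogeneous w' m := by
  induction hφ using IsWeightedHomogeneous.induction_on with
  | zero => simpa using isWeightedHomogeneous_zero R w' m
  | add p q _ _ hp hq => simpa using hp.add hq
  | monomial d r hd =>
    rw [aeval_monomial, ← hd, Finsupp.weight_apply, Finsupp.prod, algebraMap_eq]
    exact (IsWeightedHomogeneous.prod _ _ _ fun i _ => (hg i).pow (d i)).C_mul r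

end MvPolynomial.IsWeightedHomogeneous

section InvSeq

variable {R S : Type*} [CommRing R] [CommRing S]

/-- The coefficients of `(∑ x a • tᵃ)⁻¹` when `x 0 = 1`. -/
def invSeq (x : ℕ → R) : ℕ → R
  | 0 => 1
  | n + 1 => -∑ i ∈ range (n + 1), x (i + 1) * invSeq x (n - i)

@[simp] theorem invSeq_zero (x : ℕ → R) : invSeq x 0 = 1 := by rw [invSeq]

theorem invSeq_succ (x : ℕ → R) (n : ℕ) :
    invSeq x (n + 1) = -∑ p ∈ antidiagonal n, x (p.1 + 1) * invSeq x p.2 := by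
  rw [invSeq, Nat.sum_antidiagonal_eq_sum_range_succ_mk]

theorem sum_antidiagonal_mul_invSeq {x : ℕ → R} (hx : x 0 = 1) {d : ℕ} (hd : d ≠ 0) :
    ∑ p ∈ antidiagonal d, x p.1 * invSeq x p.2 = 0 := by
  obtain ⟨n, rfl⟩ := Nat.exists_eq_succ_of_ne_zero hd
  rw [Nat.sum_antidiagonal_succ, hx, one_mul, invSeq_succ, neg_add_cancel]

theorem eq_invSeq {x y : ℕ → R} (hx : x 0 = 1) (hy : y 0 = 1)
    (hxy : ∀ d ≠ 0, ∑ p ∈ antidiagonal d, x p.1 * y p.2 = 0) (n : ℕ) : y n = invSeq x n := by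
  induction n using Nat.strong_induction_on with
  | _ n ih =>
  rcases n with _ | n
  · rw [hy, invSeq_zero]
  · have h := hxy (n + 1) n.succ_ne_zero
    rw [Nat.sum_antidiagonal_succ, hx, one_mul] at h
    rw [invSeq_succ, eq_neg_of_add_eq_zero_left h]
    refine congrArg _ (sum_congr rfl fun p hp => ?_)
    rw [ih p.2 (Nat.antidiagonal.snd_lt hp)]

theorem map_invSeq (f : R →+* S) (x : ℕ → R) (n : ℕ) : f (invSeq x n) = invSeq (f ∘ x) n := by
  induction n using Nat.strong_induction_on with
  | _ n ih =>
  rcases n with _ | n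
  · simp
  · simp only [invSeq_succ, map_neg, map_sum, map_mul, Function.comp_apply]
    exact congrArg _ (sum_congr rfl fun p hp => by rw [ih p.2 (Nat.antidiagonal.snd_lt hp)])

theorem isWeightedHomogeneous_invSeq {σ M : Type*} [AddCommMonoid M] {w : σ → M}
    {x : ℕ → MvPolynomial σ R} {m : M} (hx : ∀ a, (x a).IsWeightedHomogeneous w (a • m)) (n : ℕ) :
    (invSeq x n).IsWeightedHomogeneous w (n • m) := by
  induction n using Nat.strong_induction_on with
  | _ n ih =>
  rcases n with _ | n
  · simpa using isWeightedHomogeneous_one R w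
  · rw [invSeq_succ]
    refine (IsWeightedHomogeneous.sum _ _ _ fun p hp => ?_).neg
    have := (hx (p.1 + 1)).mul (ih p.2 (Nat.antidiagonal.snd_lt hp))
    rwa [← add_smul, add_right_comm, mem_antidiagonal.mp hp] at this

end InvSeq

@[simp] theorem xg_zero : xg 𝕜 N 0 = 1 := by simp [xg]

theorem yg_succ (b : ℕ) : yg 𝕜 N (b + 1) = X (Sum.inr b) := by simp [yg]

def xgBase (a : ℕ) : MvPolynomial (Fin N) 𝕜 :=
  if h : 1 ≤ a ∧ a ≤ N then X ⟨a - 1, by omega⟩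
  else if a = 0 then 1 else 0

@[simp] theorem xgBase_zero : xgBase 𝕜 N 0 = 1 := by simp [xgBase]

theorem rename_xgBase (a : ℕ) : rename Sum.inl (xgBase 𝕜 N a) = xg 𝕜 N a := by
  unfold xg xgBase
  split_ifs <;> simp

abbrev weightX : Fin N → ℕ := fun a => 2 * ((a : ℕ) + 1)

abbrev weightXY : Fin N ⊕ ℕ → ℕ := Sum.elim (weightX N) fun b => 2 * (b + 1)

theorem isWeightedHomogeneous_xgBase (a : ℕ) :
    (xgBase 𝕜 N a).IsWeightedHomogeneous (weightX N) (a • 2) := by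
  unfold xgBase
  split_ifs with h h₀
  · convert isWeightedHomogeneous_X 𝕜 (weightX N) (⟨a - 1, by omega⟩ : Fin N) using 1
    simp only [weightX, smul_eq_mul]
    omega
  · simpa [h₀] using isWeightedHomogeneous_one 𝕜 (weightX N)
  · exact isWeightedHomogeneous_zero 𝕜 _ _

def grRetraction : MvPolynomial (Fin N ⊕ ℕ) 𝕜 →ₐ[𝕜] MvPolynomial (Fin N) 𝕜 :=
  aeval (Sum.elim X fun b => invSeq (xgBase 𝕜 N) (b + 1))

theorem grRetraction_comp_rename :
    (grRetraction 𝕜 N).comp (rename Sum.inl) = AlgHom.id 𝕜 (MvPolynomial (Fin N) 𝕜) :=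
  algHom_ext fun i => by simp [grRetraction]

theorem grRetraction_xg (a : ℕ) : grRetraction 𝕜 N (xg 𝕜 N a) = xgBase 𝕜 N a := by
  rw [← rename_xgBase, ← AlgHom.comp_apply, grRetraction_comp_rename, AlgHom.id_apply]

theorem grRetraction_yg (b : ℕ) : grRetraction 𝕜 N (yg 𝕜 N b) = invSeq (xgBase 𝕜 N) b := by
  cases b with
  | zero => simp [yg]
  | succ b => simp [yg_succ, grRetraction]

theorem relIdealGr_le_ker_grRetraction : relIdealGr 𝕜 N ≤ RingHom.ker (grRetraction 𝕜 N) := by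
  refine Ideal.span_le.mpr ?_
  rintro _ ⟨d, hd, rfl⟩
  simp only [SetLike.mem_coe, RingHom.mem_ker, map_sum, map_mul, grRetraction_xg,
    grRetraction_yg]
  exact sum_antidiagonal_mul_invSeq (xgBase_zero 𝕜 N) (by omega)

theorem grComposite_injective : Function.Injective (grComposite 𝕜 N) := by
  refine (injective_iff_map_eq_zero _).mpr fun p hp => ?_
  have hmem : rename Sum.inl p ∈ relIdealGr 𝕜 N := Ideal.Quotient.eq_zero_iff_mem.mp hp
  simpa [← AlgHom.comp_apply, grRetraction_comp_rename] using
    relIdealGr_le_ker_grRetraction 𝕜 N hmem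

theorem mk_yg (b : ℕ) :
    Ideal.Quotient.mkₐ 𝕜 (relIdealGr 𝕜 N) (yg 𝕜 N b) =
      grComposite 𝕜 N (invSeq (xgBase 𝕜 N) b) := by
  have hx : ((grComposite 𝕜 N : MvPolynomial (Fin N) 𝕜 →+* _) ∘ xgBase 𝕜 N) =
      Ideal.Quotient.mkₐ 𝕜 (relIdealGr 𝕜 N) ∘ xg 𝕜 N :=
    funext fun a => by simp [grComposite, ← rename_xgBase]
  have hrel (d : ℕ) (hd : d ≠ 0) : ∑ p ∈ antidiagonal d,
      Ideal.Quotient.mkₐ 𝕜 (relIdealGr 𝕜 N) (xg 𝕜 N p.1) *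
        Ideal.Quotient.mkₐ 𝕜 (relIdealGr 𝕜 N) (yg 𝕜 N p.2) = 0 := by
    simp only [← map_mul, ← map_sum, Ideal.Quotient.mkₐ_eq_mk, Ideal.Quotient.eq_zero_iff_mem]
    exact Ideal.subset_span ⟨d, by omega, rfl⟩
  calc Ideal.Quotient.mkₐ 𝕜 (relIdealGr 𝕜 N) (yg 𝕜 N b)
      = invSeq (Ideal.Quotient.mkₐ 𝕜 (relIdealGr 𝕜 N) ∘ xg 𝕜 N) b :=
        eq_invSeq (y := Ideal.Quotient.mkₐ 𝕜 (relIdealGr 𝕜 N) ∘ yg 𝕜 N) (by simp) (by simp [yg])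
          hrel b
    _ = invSeq ((grComposite 𝕜 N).toRingHom ∘ xgBase 𝕜 N) b := by rw [← hx]; rfl
    _ = grComposite 𝕜 N (invSeq (xgBase 𝕜 N) b) := (map_invSeq _ _ b).symm

theorem grComposite_comp_grRetraction :
    (grComposite 𝕜 N).comp (grRetraction 𝕜 N) = Ideal.Quotient.mkₐ 𝕜 (relIdealGr 𝕜 N) := by
  refine algHom_ext fun v => ?_
  cases v with
  | inl i => simp [grComposite, grRetraction]
  | inr b => rw [AlgHom.comp_apply, ← yg_succ, grRetraction_yg, mk_yg]

theorem grComposite_surjective : Function.Surjective (grComposite 𝕜 N) := by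
  intro q
  obtain ⟨r, rfl⟩ := Ideal.Quotient.mkₐ_surjective 𝕜 (relIdealGr 𝕜 N) q
  exact ⟨grRetraction 𝕜 N r, by rw [← AlgHom.comp_apply, grComposite_comp_grRetraction]⟩

theorem isWeightedHomogeneous_grRetraction {q : MvPolynomial (Fin N ⊕ ℕ) 𝕜} {d : ℕ}
    (hq : q.IsWeightedHomogeneous (weightXY N) d) :
    (grRetraction 𝕜 N q).IsWeightedHomogeneous (weightX N) d := by
  refine hq.aeval _ fun v => ?_
  cases v with
  | inl i => exact isWeightedHomogeneous_X 𝕜 _ i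
  | inr b =>
    simpa [mul_comm] using isWeightedHomogeneous_invSeq (isWeightedHomogeneous_xgBase 𝕜 N) (b + 1)

theorem map_grComposite_weightedHomogeneousSubmodule (d : ℕ) :
    (weightedHomogeneousSubmodule 𝕜 (weightX N) d).map (grComposite 𝕜 N).toLinearMap =
      (weightedHomogeneousSubmodule 𝕜 (weightXY N) d).map
        (Ideal.Quotient.mkₐ 𝕜 (relIdealGr 𝕜 N)).toLinearMap := by
  apply le_antisymm
  · rintro _ ⟨p, hp, rfl⟩
    refine ⟨rename Sum.inl p, ?_, rfl⟩
    rw [SetLike.mem_coe, mem_weightedHomogeneousSubmodule, rename_eq_aeval]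
    exact IsWeightedHomogeneous.aeval hp _ fun i => isWeightedHomogeneous_X 𝕜 (weightXY N) _
  · rintro _ ⟨q, hq, rfl⟩
    exact ⟨grRetraction 𝕜 N q, isWeightedHomogeneous_grRetraction 𝕜 N hq,
      by simp [← AlgHom.comp_apply, grComposite_comp_grRetraction]⟩

theorem stmt14 :
    Function.Bijective (grComposite 𝕜 N) ∧
    ∀ d : ℕ,
      Submodule.map (grComposite 𝕜 N).toLinearMap
        (weightedHomogeneousSubmodule 𝕜 (fun a : Fin N => 2 * ((a : ℕ) + 1)) d) =
      Submodule.map (Ideal.Quotient.mkₐ 𝕜 (relIdealGr 𝕜 N)).toLinearMap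
        (weightedHomogeneousSubmodule 𝕜
          (Sum.elim (fun a : Fin N => 2 * ((a : ℕ) + 1)) (fun b : ℕ => 2 * (b + 1))) d) := 
  ⟨⟨grComposite_injective 𝕜 N, grComposite_surjective 𝕜 N⟩,
    map_grComposite_weightedHomogeneousSubmodule 𝕜 N⟩

end
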